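/- Let α∈ℝ, α≠0, let f:ℝ→ℝ be smooth, and let V(q₁,q₂)=q₁^{4/α} f(q₂/q₁) on the open set {q₁>0}⊂ℝ⁴. Then the bivector P̃ associated with V satisfies (P̃−2HP)dH=0, i.e. for every i=1,…,4, Σ_j P̃^{ij} ∂H/∂x^j = 2H·Σ_j P^{ij} ∂H/∂x^j = 2H·X^i on {q₁>0}. -/

import Mathlib

open Real

noncomputable section

/-- Partial derivative of `F` in the `k`-th coordinate direction at `x`. -/
def pd (F : (Fin 4 → ℝ) → ℝ) (k : Fin 4) (x : Fin 4 → ℝ) : ℝ :=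
  fderiv ℝ F x (Pi.single k 1)

/-- The canonical Poisson bivector on ℝ⁴. -/
def Pcan : Matrix (Fin 4) (Fin 4) ℝ :=
  !![0, 0, 1, 0; 0, 0, 0, 1; -1, 0, 0, 0; 0, -1, 0, 0]

/-- Lie derivative of a bivector field `T` along a vector field `Xf`:
`(L_X T)^{ij} = Σ_k ( X^k ∂T^{ij}/∂x^k − T^{kj} ∂X^i/∂x^k − T^{ik} ∂X^j/∂x^k )`. -/
def lieDerivBiv (Xf : (Fin 4 → ℝ) → Fin 4 → ℝ)
    (T : (Fin 4 → ℝ) → Matrix (Fin 4) (Fin 4) ℝ)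
    (i j : Fin 4) (x : Fin 4 → ℝ) : ℝ :=
  ∑ k, (Xf x k * pd (fun y => T y i j) k x
      - T x k j * pd (fun y => Xf y i) k x
      - T x i k * pd (fun y => Xf y j) k x)

/-- Lie derivative of a 2-form `ω` along a vector field `Xf`:
`(L_X ω)_{ij} = Σ_k ( X^k ∂ω_{ij}/∂x^k + ω_{kj} ∂X^k/∂x^i + ω_{ik} ∂X^k/∂x^j )`. -/
def lieDerivForm (Xf : (Fin 4 → ℝ) → Fin 4 → ℝ)
    (ω : (Fin 4 → ℝ) → Matrix (Fin 4) (Fin 4) ℝ)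
    (i j : Fin 4) (x : Fin 4 → ℝ) : ℝ :=
  ∑ k, (Xf x k * pd (fun y => ω y i j) k x
      + ω x k j * pd (fun y => Xf y k) i x
      + ω x i k * pd (fun y => Xf y k) j x)

/-- The Jacobiator of a bivector field `A`; `A` satisfies the Jacobi identity iff it
vanishes for all indices `i j k`. -/
def jac (A : (Fin 4 → ℝ) → Matrix (Fin 4) (Fin 4) ℝ)
    (i j k : Fin 4) (x : Fin 4 → ℝ) : ℝ :=
  ∑ l, (A x l i * pd (fun y => A y j k) l x
      + A x l j * pd (fun y => A y k i) l x
      + A x l k * pd (fun y => A y i j) l x)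

/-- The mixed Schouten bracket expression of two bivector fields `A` and `B`. -/
def mixedSchouten (A B : (Fin 4 → ℝ) → Matrix (Fin 4) (Fin 4) ℝ)
    (i j k : Fin 4) (x : Fin 4 → ℝ) : ℝ :=
  ∑ l, (A x l i * pd (fun y => B y j k) l x
      + A x l j * pd (fun y => B y k i) l x
      + A x l k * pd (fun y => B y i j) l x
      + B x l i * pd (fun y => A y j k) l x
      + B x l j * pd (fun y => A y k i) l x
      + B x l k * pd (fun y => A y i j) l x)

/-- The weight-homogeneous potential `V = q₁^{4/α} f(q₂/q₁)` (real power, for `q₁ > 0`). -/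
def Vw (α : ℝ) (f : ℝ → ℝ) (x : Fin 4 → ℝ) : ℝ := (x 0) ^ ((4 : ℝ) / α) * f (x 1 / x 0)

/-- The Hamiltonian `H = (p₁² + p₂²)/2 + V`. -/
def Hw (α : ℝ) (f : ℝ → ℝ) (x : Fin 4 → ℝ) : ℝ := ((x 2) ^ 2 + (x 3) ^ 2) / 2 + Vw α f x

/-- The Hamiltonian vector field `X = (p₁, p₂, −∂V/∂q₁, −∂V/∂q₂)`. -/
def Xw (α : ℝ) (f : ℝ → ℝ) (x : Fin 4 → ℝ) : Fin 4 → ℝ :=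
  ![x 2, x 3, -(pd (Vw α f) 0 x), -(pd (Vw α f) 1 x)]

/-- The invariant bivector `P̃` associated with the weight-homogeneous potential. -/
def Ptw (α : ℝ) (f : ℝ → ℝ) (x : Fin 4 → ℝ) : Matrix (Fin 4) (Fin 4) ℝ :=
  let q1 := x 0; let q2 := x 1; let p1 := x 2; let p2 := x 3
  let V1 := pd (Vw α f) 0 x
  let V2 := pd (Vw α f) 1 x
  let v := Vw α f x
  let e12 := α * (p1 * q2 - p2 * q1)
  let e13 := p1 ^ 2 - p2 ^ 2 - α * q2 * V2 + 2 * v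
  let e14 := 2 * p1 * p2 + α * q1 * V2
  let e23 := 2 * p1 * p2 + α * q2 * V1
  let e24 := -e13
  let e34 := 2 * p1 * V2 - 2 * p2 * V1
  !![0, e12, e13, e14;
     -(e12), 0, e23, e24;
     -(e13), -(e23), 0, e34;
     -(e14), -(e24), -(e34), 0]

set_option maxHeartbeats 2000000 in
/-- for `V = q₁^{4/α} f(q₂/q₁)`, the bivector `P̃` satisfies
`(P̃ − 2HP) dH = 0`, i.e. `Σ_j P̃^{ij} ∂H/∂x^j = 2H Σ_j P^{ij} ∂H/∂x^j = 2H X^i` on `{q₁ > 0}`. -/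
theorem statement7 (α : ℝ) (hα : α ≠ 0) (f : ℝ → ℝ) (hf : ContDiff ℝ (⊤ : ℕ∞) f) :
    ∀ x : Fin 4 → ℝ, 0 < x 0 →
      ∀ i : Fin 4,
        (∑ j, Ptw α f x i j * pd (Hw α f) j x) =
            2 * Hw α f x * (∑ j, Pcan i j * pd (Hw α f) j x) ∧
        2 * Hw α f x * (∑ j, Pcan i j * pd (Hw α f) j x) = 2 * Hw α f x * Xw α f x i := by
  intro x hx i
  have hx0 : x 0 ≠ 0 := ne_of_gt hx
  set c : ℝ := 4 / α with hc
  set u : ℝ := x 1 / x 0 with hu0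
  -- basic derivatives
  have h0 : HasFDerivAt (fun y : Fin 4 → ℝ => y 0)
      (ContinuousLinearMap.proj 0 : (Fin 4 → ℝ) →L[ℝ] ℝ) x :=
    ((ContinuousLinearMap.proj 0 : (Fin 4 → ℝ) →L[ℝ] ℝ)).hasFDerivAt
  have h1 : HasFDerivAt (fun y : Fin 4 → ℝ => y 1)
      (ContinuousLinearMap.proj 1 : (Fin 4 → ℝ) →L[ℝ] ℝ) x :=
    ((ContinuousLinearMap.proj 1 : (Fin 4 → ℝ) →L[ℝ] ℝ)).hasFDerivAt
  have h2 : HasFDerivAt (fun y : Fin 4 → ℝ => y 2)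
      (ContinuousLinearMap.proj 2 : (Fin 4 → ℝ) →L[ℝ] ℝ) x :=
    ((ContinuousLinearMap.proj 2 : (Fin 4 → ℝ) →L[ℝ] ℝ)).hasFDerivAt
  have h3 : HasFDerivAt (fun y : Fin 4 → ℝ => y 3)
      (ContinuousLinearMap.proj 3 : (Fin 4 → ℝ) →L[ℝ] ℝ) x :=
    ((ContinuousLinearMap.proj 3 : (Fin 4 → ℝ) →L[ℝ] ℝ)).hasFDerivAt
  have hinv : HasFDerivAt (fun y : Fin 4 → ℝ => (y 0)⁻¹)
      ((-(x 0 ^ 2)⁻¹) • (ContinuousLinearMap.proj 0 : (Fin 4 → ℝ) →L[ℝ] ℝ)) x :=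
    (hasDerivAt_inv hx0).comp_hasFDerivAt x h0
  have hquo : HasFDerivAt (fun y : Fin 4 → ℝ => y 1 / y 0)
      ((x 1) • ((-(x 0 ^ 2)⁻¹) • (ContinuousLinearMap.proj 0 : (Fin 4 → ℝ) →L[ℝ] ℝ))
        + (x 0)⁻¹ • (ContinuousLinearMap.proj 1 : (Fin 4 → ℝ) →L[ℝ] ℝ)) x := by
    rw [show (fun y : Fin 4 → ℝ => y 1 / y 0) = (fun y : Fin 4 → ℝ => y 1) * (fun y : Fin 4 → ℝ => (y 0)⁻¹) from
      funext fun y => div_eq_mul_inv _ _]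
    exact h1.mul hinv
  have hdf : HasDerivAt f (deriv f u) u :=
    ((hf.differentiable (by simp)) u).hasDerivAt
  have hfu : HasFDerivAt (fun y : Fin 4 → ℝ => f (y 1 / y 0))
      ((deriv f u) • ((x 1) • ((-(x 0 ^ 2)⁻¹) • (ContinuousLinearMap.proj 0 : (Fin 4 → ℝ) →L[ℝ] ℝ))
        + (x 0)⁻¹ • (ContinuousLinearMap.proj 1 : (Fin 4 → ℝ) →L[ℝ] ℝ))) x :=
    hdf.comp_hasFDerivAt x hquo
  have hA : HasFDerivAt (fun y : Fin 4 → ℝ => (y 0) ^ c)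
      ((c * x 0 ^ (c - 1)) • (ContinuousLinearMap.proj 0 : (Fin 4 → ℝ) →L[ℝ] ℝ)) x :=
    h0.rpow_const (Or.inl hx0)
  have hV : HasFDerivAt (Vw α f)
      ((x 0 ^ c) • ((deriv f u) • ((x 1) • ((-(x 0 ^ 2)⁻¹) • (ContinuousLinearMap.proj 0 : (Fin 4 → ℝ) →L[ℝ] ℝ))
          + (x 0)⁻¹ • (ContinuousLinearMap.proj 1 : (Fin 4 → ℝ) →L[ℝ] ℝ)))
        + (f u) • ((c * x 0 ^ (c - 1)) • (ContinuousLinearMap.proj 0 : (Fin 4 → ℝ) →L[ℝ] ℝ))) x :=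
    hA.mul hfu
  have hK : HasFDerivAt (fun y : Fin 4 → ℝ => ((y 2) ^ 2 + (y 3) ^ 2) / 2)
      (((1:ℝ)/2) • (((x 2) • (ContinuousLinearMap.proj 2 : (Fin 4 → ℝ) →L[ℝ] ℝ)
          + (x 2) • (ContinuousLinearMap.proj 2 : (Fin 4 → ℝ) →L[ℝ] ℝ))
        + ((x 3) • (ContinuousLinearMap.proj 3 : (Fin 4 → ℝ) →L[ℝ] ℝ)
          + (x 3) • (ContinuousLinearMap.proj 3 : (Fin 4 → ℝ) →L[ℝ] ℝ)))) x := by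
    have := ((h2.mul h2).add (h3.mul h3)).const_mul ((1:ℝ)/2)
    simpa [sq, div_eq_inv_mul, one_div] using this
  have hH : HasFDerivAt (Hw α f)
      ((((1:ℝ)/2) • (((x 2) • (ContinuousLinearMap.proj 2 : (Fin 4 → ℝ) →L[ℝ] ℝ)
          + (x 2) • (ContinuousLinearMap.proj 2 : (Fin 4 → ℝ) →L[ℝ] ℝ))
        + ((x 3) • (ContinuousLinearMap.proj 3 : (Fin 4 → ℝ) →L[ℝ] ℝ)
          + (x 3) • (ContinuousLinearMap.proj 3 : (Fin 4 → ℝ) →L[ℝ] ℝ))))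
        + ((x 0 ^ c) • ((deriv f u) • ((x 1) • ((-(x 0 ^ 2)⁻¹) • (ContinuousLinearMap.proj 0 : (Fin 4 → ℝ) →L[ℝ] ℝ))
          + (x 0)⁻¹ • (ContinuousLinearMap.proj 1 : (Fin 4 → ℝ) →L[ℝ] ℝ)))
        + (f u) • ((c * x 0 ^ (c - 1)) • (ContinuousLinearMap.proj 0 : (Fin 4 → ℝ) →L[ℝ] ℝ)))) x :=
    hK.add hV
  have sing : ∀ (k j : Fin 4), (ContinuousLinearMap.proj k : (Fin 4 → ℝ) →L[ℝ] ℝ)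
      (Pi.single j (1:ℝ)) = if k = j then 1 else 0 := by
    intro k j
    simp [ContinuousLinearMap.proj_apply, Pi.single_apply, eq_comm]
  have hV1 : pd (Vw α f) 0 x
      = x 0 ^ c * (deriv f u * (x 1 * -(x 0 ^ 2)⁻¹)) + f u * (c * x 0 ^ (c - 1)) := by
    rw [pd, hV.fderiv]
    simp [sing]
  have hV2 : pd (Vw α f) 1 x = x 0 ^ c * (deriv f u * (x 0)⁻¹) := by
    rw [pd, hV.fderiv]
    simp [sing]
  have hH0 : pd (Hw α f) 0 x = pd (Vw α f) 0 x := by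
    rw [pd, pd, hH.fderiv, hV.fderiv]
    simp [sing]
  have hH1 : pd (Hw α f) 1 x = pd (Vw α f) 1 x := by
    rw [pd, pd, hH.fderiv, hV.fderiv]
    simp [sing]
  have hH2 : pd (Hw α f) 2 x = x 2 := by
    rw [pd, hH.fderiv]
    simp [sing]
    ring
  have hH3 : pd (Hw α f) 3 x = x 3 := by
    rw [pd, hH.fderiv]
    simp [sing]
    ring
  have hpow : x 0 ^ (c - 1) * x 0 = x 0 ^ c := by
    rw [Real.rpow_sub_one hx0]
    field_simp
  have hVx : Vw α f x = x 0 ^ c * f u := rfl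
  have hE : α * (x 0 * pd (Vw α f) 0 x + x 1 * pd (Vw α f) 1 x) = 4 * Vw α f x := by
    rw [hV1, hV2, hVx]
    have hαc : α * c = 4 := by rw [hc]; field_simp
    have h4 : x 0 ^ c * (deriv f u * (x 1 * -(x 0 ^ 2)⁻¹)) * x 0
        + x 1 * (x 0 ^ c * (deriv f u * (x 0)⁻¹)) = 0 := by
      field_simp
      ring
    calc α * (x 0 * (x 0 ^ c * (deriv f u * (x 1 * -(x 0 ^ 2)⁻¹)) + f u * (c * x 0 ^ (c - 1)))
          + x 1 * (x 0 ^ c * (deriv f u * (x 0)⁻¹)))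
        = α * (x 0 ^ c * (deriv f u * (x 1 * -(x 0 ^ 2)⁻¹)) * x 0
            + x 1 * (x 0 ^ c * (deriv f u * (x 0)⁻¹)))
          + (α * c) * (x 0 ^ (c - 1) * x 0) * f u := by ring
      _ = 4 * (x 0 ^ c * f u) := by rw [h4, hαc, hpow]; ring
  have hHx : Hw α f x = ((x 2) ^ 2 + (x 3) ^ 2) / 2 + Vw α f x := rfl
  fin_cases i <;> refine ⟨?_, ?_⟩ <;>
    simp only [Fin.sum_univ_four, Ptw, Pcan, Xw, hH0, hH1, hH2, hH3, hHx,
      Matrix.cons_val', Matrix.cons_val_zero, Matrix.cons_val_one, Matrix.head_cons,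
      Matrix.head_fin_const, Matrix.empty_val', Matrix.cons_val_fin_one,
      Matrix.cons_val_two, Matrix.tail_cons, Matrix.cons_val_three,
      Matrix.of_apply, Fin.isValue, Fin.zero_eta, Fin.mk_one, Fin.reduceFinMk]
  · ring
  · ring
  · linear_combination (x 3) * hE
  · ring
  · ring
  · ring
  · linear_combination (-(pd (Vw α f) 1 x)) * hE
  · ring

end
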